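/- Let G be a Monge DAG on {s,...,N}. In the minimal shortest-path tree T_min (where each node n > s selects as parent the least minimizer of F(i)+c(i,n)), the depth of every node n equals d_min(n), the least number of links among shortest s-n paths. Symmetrically, in the maximal shortest-path tree T_max (greatest minimizer as parent), the depth of n equals d_max(n). -/

import Mathlib

/-!
A shortest `s`-`n` path with `m + 1` links is a shortest path with `m` links to some optimal
parent `i` of `n`, followed by the edge `i → n` (Bellman's equation). Monge lengths add an exchange
property: if `j ≤ i` and shortest paths to `i` and to `j` have `p < q` links, the two paths cross,
and swapping their tails at the crossing gives shortest paths to `j` with `p` links and to `i`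
with `q` links. Hence the least optimal parent realises the least link count of all optimal
parents, the greatest one the greatest, and induction on `n` along the tree gives the depths.
-/

/-- A Monge (submodular) edge-length function on the complete DAG on `{s,...,N}`. -/
def IsMonge (s N : ℕ) (c : ℕ → ℕ → ℝ) : Prop :=
  ∀ i₁ i₂ j₂ j₁ : ℕ, s ≤ i₁ → i₁ < i₂ → i₂ < j₂ → j₂ < j₁ → j₁ ≤ N →
    c i₁ j₂ + c i₂ j₁ ≤ c i₁ j₁ + c i₂ j₂

/-- `v 0, v 1, ..., v m` is an `m`-link path from `a` to `b` inside `{s,...,N}`. -/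
def IsPath (s N a b m : ℕ) (v : ℕ → ℕ) : Prop :=
  v 0 = a ∧ v m = b ∧ (∀ k < m, v k < v (k + 1)) ∧ s ≤ a ∧ b ≤ N

/-- The length of the `m`-link path `v 0, ..., v m` under edge lengths `c`. -/
def pathLen (c : ℕ → ℕ → ℝ) (m : ℕ) (v : ℕ → ℕ) : ℝ :=
  ∑ k ∈ Finset.range m, c (v k) (v (k + 1))

/-- The set of lengths of `m`-link `a`-`b` paths in the complete DAG on `{s,...,N}`. -/
def pathLens (s N a b m : ℕ) (c : ℕ → ℕ → ℝ) : Set ℝ :=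
  {x | ∃ v, IsPath s N a b m v ∧ pathLen c m v = x}

/-- The set of link counts of shortest `s`-`n` paths in `G(lam)`
    (the graph with `lam` subtracted from every edge length). -/
def DSet (s N n : ℕ) (c : ℕ → ℕ → ℝ) (lam : ℝ) : Set ℕ :=
  {m | ∃ v, IsPath s N s n m v ∧
    ∀ m' w, IsPath s N s n m' w →
      pathLen c m v - m * lam ≤ pathLen c m' w - m' * lam}

/-- The set of lengths of all `s`-`n` paths (any number of links). -/
def allLens (s N n : ℕ) (c : ℕ → ℕ → ℝ) : Set ℝ :=
  {x | ∃ m v, IsPath s N s n m v ∧ pathLen c m v = x}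

open Finset

def IsShortestDist (s N : ℕ) (c : ℕ → ℕ → ℝ) (F : ℕ → ℝ) : Prop :=
  ∀ n, s ≤ n → n ≤ N → IsLeast (allLens s N n c) (F n)

/-- The candidates `argmin_{s ≤ i < n} (F i + c i n)` for the parent of `n` in a shortest-path
tree. -/
def parentSet (s : ℕ) (c : ℕ → ℕ → ℝ) (F : ℕ → ℝ) (n : ℕ) : Set ℕ :=
  {i | s ≤ i ∧ i < n ∧ ∀ i', s ≤ i' → i' < n → F i + c i n ≤ F i' + c i' n}

/-- `splice u e w b` follows `u` up to index `e` and then jumps to `w (b + 1)`, following `w`. -/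
def splice (u : ℕ → ℕ) (e : ℕ) (w : ℕ → ℕ) (b : ℕ) : ℕ → ℕ :=
  fun k => if k ≤ e then u k else w (k - e + b)

lemma IsMonge.le_of_le {s N : ℕ} {c : ℕ → ℕ → ℝ} (hc : IsMonge s N c) {i₁ i₂ j₂ j₁ : ℕ}
    (hs : s ≤ i₁) (h₁ : i₁ < i₂) (h₂ : i₂ < j₂) (h₃ : j₂ ≤ j₁) (hN : j₁ ≤ N) :
    c i₁ j₂ + c i₂ j₁ ≤ c i₁ j₁ + c i₂ j₂ := by
  rcases h₃.eq_or_lt with rfl | h₃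
  · exact le_rfl
  · exact hc i₁ i₂ j₂ j₁ hs h₁ h₂ h₃ hN

namespace IsPath

variable {s N a b m : ℕ} {v : ℕ → ℕ}

lemma strictMonoOn (hv : IsPath s N a b m v) : StrictMonoOn v (Set.Iic m) :=
  strictMonoOn_Iic_of_lt_succ fun k hk => by simpa using hv.2.2.1 k hk

lemma lt {k l : ℕ} (hv : IsPath s N a b m v) (hkl : k < l) (hl : l ≤ m) : v k < v l :=
  hv.strictMonoOn (Set.mem_Iic.2 (hkl.le.trans hl)) (Set.mem_Iic.2 hl) hkl

lemma start_le {k : ℕ} (hv : IsPath s N a b m v) (hk : k ≤ m) : a ≤ v k :=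
  hv.1 ▸ hv.strictMonoOn.monotoneOn (Set.mem_Iic.2 m.zero_le) (Set.mem_Iic.2 hk) k.zero_le

lemma lt_end {k : ℕ} (hv : IsPath s N a b m v) (hk : k < m) : v k < b :=
  hv.2.1 ▸ hv.lt hk le_rfl

lemma le_end {k : ℕ} (hv : IsPath s N a b m v) (hk : k ≤ m) : v k ≤ b :=
  hv.2.1 ▸ hv.strictMonoOn.monotoneOn (Set.mem_Iic.2 hk) (Set.mem_Iic.2 le_rfl) hk

lemma start_le_end (hv : IsPath s N a b m v) : a ≤ b :=
  hv.2.1 ▸ hv.start_le le_rfl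

lemma length_eq_zero_iff (hv : IsPath s N a b m v) : m = 0 ↔ a = b := by
  refine ⟨fun hm => ?_, fun hab => ?_⟩
  · subst hm
    exact hv.1.symm.trans hv.2.1
  · by_contra hm
    exact (hv.lt_end (Nat.pos_of_ne_zero hm)).ne (hv.1.trans hab)

lemma pre (hv : IsPath s N a b (m + 1) v) : IsPath s N a (v m) m v :=
  ⟨hv.1, rfl, fun k hk => hv.2.2.1 k (by omega), hv.2.2.2.1,
    (hv.lt_end (lt_add_one m)).le.trans hv.2.2.2.2⟩

lemma snoc {n : ℕ} (hv : IsPath s N a b m v) (hbn : b < n) (hn : n ≤ N) :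
    IsPath s N a n (m + 1) (Function.update v (m + 1) n) := by
  refine ⟨by simp [hv.1], by simp, fun k hk => ?_, hv.2.2.2.1, hn⟩
  rcases (Nat.lt_succ_iff.1 hk).eq_or_lt with rfl | hk
  · simpa [hv.2.1] using hbn
  · rw [Function.update_of_ne (by omega), Function.update_of_ne (by omega)]
    exact hv.2.2.1 k hk

lemma splice {x a' y p b t e : ℕ} {u w : ℕ → ℕ} (hu : IsPath s N a x p u)
    (hw : IsPath s N a' y (b + 1 + t) w) (hep : e ≤ p) (hcross : u e < w (b + 1)) :
    IsPath s N a y (e + 1 + t) (splice u e w b) := by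
  refine ⟨by simp [_root_.splice, hu.1], ?_, fun k hk => ?_, hu.2.2.2.1, hw.2.2.2.2⟩
  · simp only [_root_.splice, if_neg (show ¬e + 1 + t ≤ e by omega)]
    rw [show e + 1 + t - e + b = b + 1 + t by omega, hw.2.1]
  · unfold _root_.splice
    split_ifs with h₁ h₂ h₂
    · exact hu.lt (lt_add_one k) (by omega)
    · obtain rfl : k = e := by omega
      simpa [add_comm] using hcross
    · omega
    · exact hw.lt (by omega) (by omega)

end IsPath

section PathLength

variable {c : ℕ → ℕ → ℝ} {m : ℕ} {v : ℕ → ℕ}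

lemma pathLen_succ : pathLen c (m + 1) v = pathLen c m v + c (v m) (v (m + 1)) :=
  sum_range_succ _ _

lemma pathLen_congr {w : ℕ → ℕ} (h : ∀ k ≤ m, v k = w k) : pathLen c m v = pathLen c m w :=
  sum_congr rfl fun k hk => by
    rw [h k (mem_range.1 hk).le, h (k + 1) (mem_range.1 hk)]

lemma pathLen_add (e t : ℕ) :
    pathLen c (e + t) v = pathLen c e v + pathLen c t (fun k => v (e + k)) :=
  sum_range_add _ e t

lemma pathLen_snoc (n : ℕ) :
    pathLen c (m + 1) (Function.update v (m + 1) n) = pathLen c m v + c (v m) n := by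
  rw [pathLen_succ, pathLen_congr fun k hk => Function.update_of_ne (by omega) _ _]
  simp

lemma pathLen_split (e t : ℕ) :
    pathLen c (e + 1 + t) v
      = pathLen c e v + c (v e) (v (e + 1)) + pathLen c t (fun k => v (e + 1 + k)) := by
  rw [pathLen_add, pathLen_succ]

lemma pathLen_splice (u w : ℕ → ℕ) (e b t : ℕ) :
    pathLen c (e + 1 + t) (splice u e w b)
      = pathLen c e u + c (u e) (w (b + 1)) + pathLen c t (fun k => w (b + 1 + k)) := by
  have h_pre : pathLen c e (splice u e w b) = pathLen c e u := pathLen_congr fun k hk => if_pos hk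
  have h_tail : pathLen c t (fun k => splice u e w b (e + 1 + k))
      = pathLen c t (fun k => w (b + 1 + k)) := pathLen_congr fun k _ => by
    simp only [splice, if_neg (show ¬e + 1 + k ≤ e by omega)]
    congr 1
    omega
  have h_edge : splice u e w b (e + 1) = w (b + 1) := by
    simp only [splice, if_neg (show ¬e + 1 ≤ e by omega)]
    congr 1
    omega
  rw [pathLen_split, h_pre, h_tail, h_edge, show splice u e w b e = u e from if_pos le_rfl]

end PathLength

section ShortestPaths

variable {s N : ℕ} {c : ℕ → ℕ → ℝ}

lemma mem_DSet_zero_iff {n m : ℕ} : m ∈ DSet s N n c 0 ↔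
    ∃ v, IsPath s N s n m v ∧ ∀ m' w, IsPath s N s n m' w → pathLen c m v ≤ pathLen c m' w := by
  simp [DSet]

lemma eq_zero_of_mem_DSet_self {m : ℕ} {lam : ℝ} (hm : m ∈ DSet s N s c lam) : m = 0 := by
  obtain ⟨v, hv, -⟩ := hm
  exact hv.length_eq_zero_iff.2 rfl

lemma pos_of_mem_DSet {n m : ℕ} {lam : ℝ} (hm : m ∈ DSet s N n c lam) (hsn : s < n) : 0 < m := by
  obtain ⟨v, hv, -⟩ := hm
  exact Nat.pos_of_ne_zero fun h => hsn.ne (hv.length_eq_zero_iff.1 h)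

lemma exists_crossing {p d i j : ℕ} {u w : ℕ → ℕ} (hu : IsPath s N s i p u)
    (hw : IsPath s N s j (p + d) w) (hd : 0 < d) (hji : j ≤ i) :
    ∃ e < p, u e < w (e + d) ∧ w (e + 1 + d) ≤ u (e + 1) := by
  have h0 : ¬(0 ≤ p → w (0 + d) ≤ u 0) := by
    simpa [hu.1, ← hw.1] using hw.lt hd (by omega)
  obtain ⟨e, he, he1⟩ := Nat.exists_not_and_succ_of_not_zero_of_exists
    (p := fun k => k ≤ p → w (k + d) ≤ u k) h0 ⟨p, fun _ => by rw [hu.2.1, hw.2.1]; exact hji⟩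
  push Not at he
  have hep : e < p := he.1.lt_of_ne fun h => by
    subst h
    rw [hu.2.1, hw.2.1] at he
    exact absurd hji (not_le.2 he.2)
  exact ⟨e, hep, he.2, he1 hep⟩

theorem DSet_exchange (hc : IsMonge s N c) {i j p q : ℕ} (hji : j ≤ i)
    (hp : p ∈ DSet s N i c 0) (hq : q ∈ DSet s N j c 0) (hpq : p < q) :
    p ∈ DSet s N j c 0 ∧ q ∈ DSet s N i c 0 := by
  simp only [mem_DSet_zero_iff] at hp hq ⊢
  obtain ⟨u, hu, hu_min⟩ := hp
  obtain ⟨w, hw, hw_min⟩ := hq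
  obtain ⟨d, rfl⟩ : ∃ d, q = p + d := ⟨q - p, by omega⟩
  obtain ⟨e, hep, hue, hwu⟩ := exists_crossing hu hw (by omega) hji
  obtain ⟨t, rfl⟩ : ∃ t, p = e + 1 + t := ⟨p - e - 1, by omega⟩
  rw [show e + 1 + t + d = e + d + 1 + t by ring] at hw hw_min ⊢
  rw [show e + 1 + d = e + d + 1 by ring] at hwu
  have hw_step : w (e + d) < w (e + d + 1) := hw.lt (lt_add_one _) (by omega)
  have hS := hu.splice hw hep.le (hue.trans hw_step)
  have hR := hw.splice hu (e := e + d) (by omega) (hw_step.trans_le hwu)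
  have hmonge := hc.le_of_le (hu.start_le (k := e) (by omega)) hue hw_step hwu
    ((hu.le_end (k := e + 1) (by omega)).trans hu.2.2.2.2)
  -- at the crossing, swapping tails costs no more than keeping them
  have hlen : pathLen c (e + 1 + t) (splice u e w (e + d))
      + pathLen c (e + d + 1 + t) (splice w (e + d) u e)
      ≤ pathLen c (e + 1 + t) u + pathLen c (e + d + 1 + t) w := by
    rw [pathLen_splice, pathLen_splice, pathLen_split (v := u), pathLen_split (v := w)]
    linarith
  have hu_le := hu_min _ _ hR
  have hw_le := hw_min _ _ hS
  exact ⟨⟨_, hS, fun m' x hx => by linarith [hw_min m' x hx]⟩,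
    ⟨_, hR, fun m' x hx => by linarith [hu_min m' x hx]⟩⟩

end ShortestPaths

namespace IsShortestDist

variable {s N : ℕ} {c : ℕ → ℕ → ℝ} {F : ℕ → ℝ}

lemma le_pathLen (hF : IsShortestDist s N c F) {n m : ℕ} {v : ℕ → ℕ}
    (hv : IsPath s N s n m v) : F n ≤ pathLen c m v :=
  (hF n hv.start_le_end hv.2.2.2.2).2 ⟨m, v, hv, rfl⟩

lemma le_add (hF : IsShortestDist s N c F) {i n : ℕ} (hsi : s ≤ i) (hin : i < n)
    (hnN : n ≤ N) : F n ≤ F i + c i n := by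
  obtain ⟨m, v, hv, hvF⟩ := (hF i hsi (by omega)).1
  simpa [pathLen_snoc, hv.2.1, hvF] using hF.le_pathLen (hv.snoc hin hnN)

lemma mem_DSet_zero_iff (hF : IsShortestDist s N c F) {n m : ℕ} (hsn : s ≤ n) (hnN : n ≤ N) :
    m ∈ DSet s N n c 0 ↔ ∃ v, IsPath s N s n m v ∧ pathLen c m v = F n := by
  rw [_root_.mem_DSet_zero_iff]
  constructor
  · rintro ⟨v, hv, hv_min⟩
    obtain ⟨m', w, hw, hwF⟩ := (hF n hsn hnN).1
    exact ⟨v, hv, le_antisymm (hwF ▸ hv_min m' w hw) (hF.le_pathLen hv)⟩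
  · rintro ⟨v, hv, hvF⟩
    exact ⟨v, hv, fun m' w hw => hvF ▸ hF.le_pathLen hw⟩

lemma add_eq_of_mem_parentSet (hF : IsShortestDist s N c F) {i n : ℕ} (hsn : s < n)
    (hnN : n ≤ N) (hi : i ∈ parentSet s c F n) : F i + c i n = F n := by
  refine le_antisymm ?_ (hF.le_add hi.1 hi.2.1 hnN)
  obtain ⟨m, v, hv, hvF⟩ := (hF n hsn.le hnN).1
  obtain ⟨k, rfl⟩ := Nat.exists_eq_add_one_of_ne_zero fun h => hsn.ne (hv.length_eq_zero_iff.1 h)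
  have hlast : v k < n := hv.lt_end (lt_add_one k)
  calc F i + c i n ≤ F (v k) + c (v k) n := hi.2.2 _ (hv.start_le (by omega)) hlast
    _ ≤ pathLen c k v + c (v k) n := by gcongr; exact hF.le_pathLen hv.pre
    _ = F n := by rw [← hvF, pathLen_succ, hv.2.1]

lemma succ_mem_DSet_iff (hF : IsShortestDist s N c F) {n m : ℕ} (hsn : s < n) (hnN : n ≤ N) :
    m + 1 ∈ DSet s N n c 0 ↔ ∃ i ∈ parentSet s c F n, m ∈ DSet s N i c 0 := by
  rw [hF.mem_DSet_zero_iff hsn.le hnN]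
  constructor
  · rintro ⟨v, hv, hvF⟩
    have hsi : s ≤ v m := hv.start_le (by omega)
    have hin : v m < n := hv.lt_end (lt_add_one m)
    have hlen : pathLen c m v + c (v m) n = F n := by rw [← hvF, pathLen_succ, hv.2.1]
    have hpre := hF.le_pathLen hv.pre
    have hstep := hF.le_add hsi hin hnN
    refine ⟨v m, ⟨hsi, hin, fun i' hsi' hi'n => ?_⟩,
      (hF.mem_DSet_zero_iff hsi (by omega)).2 ⟨v, hv.pre, by linarith⟩⟩
    linarith [hF.le_add hsi' hi'n hnN]
  · rintro ⟨i, hi, hm⟩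
    obtain ⟨u, hu, huF⟩ := (hF.mem_DSet_zero_iff hi.1 (hi.2.1.le.trans hnN)).1 hm
    exact ⟨_, hu.snoc hi.2.1 hnN, by
      rw [pathLen_snoc, hu.2.1, huF, hF.add_eq_of_mem_parentSet hsn hnN hi]⟩

theorem isLeast_DSet_succ (hc : IsMonge s N c) (hF : IsShortestDist s N c F) {n j a : ℕ}
    (hsn : s < n) (hnN : n ≤ N) (hj : IsLeast (parentSet s c F n) j)
    (ha : IsLeast (DSet s N j c 0) a) : IsLeast (DSet s N n c 0) (a + 1) := by
  refine ⟨(hF.succ_mem_DSet_iff hsn hnN).2 ⟨j, hj.1, ha.1⟩, fun k hk => ?_⟩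
  obtain ⟨m, rfl⟩ := Nat.exists_eq_add_one_of_ne_zero (pos_of_mem_DSet hk hsn).ne'
  obtain ⟨i, hi, hm⟩ := (hF.succ_mem_DSet_iff hsn hnN).1 hk
  by_contra! hma
  have := ha.2 (DSet_exchange hc (hj.2 hi) hm ha.1 (by omega)).1
  omega

theorem isGreatest_DSet_succ (hc : IsMonge s N c) (hF : IsShortestDist s N c F) {n j a : ℕ}
    (hsn : s < n) (hnN : n ≤ N) (hj : IsGreatest (parentSet s c F n) j)
    (ha : IsGreatest (DSet s N j c 0) a) : IsGreatest (DSet s N n c 0) (a + 1) := by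
  refine ⟨(hF.succ_mem_DSet_iff hsn hnN).2 ⟨j, hj.1, ha.1⟩, fun k hk => ?_⟩
  obtain ⟨m, rfl⟩ := Nat.exists_eq_add_one_of_ne_zero (pos_of_mem_DSet hk hsn).ne'
  obtain ⟨i, hi, hm⟩ := (hF.succ_mem_DSet_iff hsn hnN).1 hk
  by_contra! hma
  have := ha.2 (DSet_exchange hc (hj.2 hi) ha.1 hm (by omega)).2
  omega

end IsShortestDist

/-- In the minimal (resp. maximal) shortest-path tree, the depth of each node `n`
equals the least (resp. greatest) number of links among shortest `s`-`n` paths. -/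
theorem stmt8 (s N : ℕ) (c : ℕ → ℕ → ℝ) (hc : IsMonge s N c) (F : ℕ → ℝ)
    (hF : ∀ n, s ≤ n → n ≤ N → IsLeast (allLens s N n c) (F n))
    (pmin pmax depmin depmax dmin dmax : ℕ → ℕ)
    (hpmin : ∀ n, s + 1 ≤ n → n ≤ N →
      IsLeast {i | s ≤ i ∧ i < n ∧
        ∀ i', s ≤ i' → i' < n → F i + c i n ≤ F i' + c i' n} (pmin n))
    (hpmax : ∀ n, s + 1 ≤ n → n ≤ N →
      IsGreatest {i | s ≤ i ∧ i < n ∧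
        ∀ i', s ≤ i' → i' < n → F i + c i n ≤ F i' + c i' n} (pmax n))
    (hdepmin0 : depmin s = 0)
    (hdepmin : ∀ n, s + 1 ≤ n → n ≤ N → depmin n = depmin (pmin n) + 1)
    (hdepmax0 : depmax s = 0)
    (hdepmax : ∀ n, s + 1 ≤ n → n ≤ N → depmax n = depmax (pmax n) + 1)
    (hdmin : ∀ n, s ≤ n → n ≤ N → IsLeast (DSet s N n c 0) (dmin n))
    (hdmax : ∀ n, s ≤ n → n ≤ N → IsGreatest (DSet s N n c 0) (dmax n)) :
    ∀ n, s ≤ n → n ≤ N → depmin n = dmin n ∧ depmax n = dmax n := by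
  intro n
  induction n using Nat.strong_induction_on with
  | _ n ih =>
  intro hsn hnN
  rcases hsn.eq_or_lt with rfl | hsn
  · rw [hdepmin0, hdepmax0, eq_zero_of_mem_DSet_self (hdmin s le_rfl hnN).1,
      eq_zero_of_mem_DSet_self (hdmax s le_rfl hnN).1]
    exact ⟨rfl, rfl⟩
  obtain ⟨hs_pmin, hpmin_lt, -⟩ := (hpmin n hsn hnN).1
  obtain ⟨hs_pmax, hpmax_lt, -⟩ := (hpmax n hsn hnN).1
  have hpmin_N := hpmin_lt.le.trans hnN
  have hpmax_N := hpmax_lt.le.trans hnN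
  refine ⟨?_, ?_⟩
  · rw [hdepmin n hsn hnN, (ih _ hpmin_lt hs_pmin hpmin_N).1]
    exact (IsShortestDist.isLeast_DSet_succ hc hF hsn hnN (hpmin n hsn hnN)
      (hdmin _ hs_pmin hpmin_N)).unique (hdmin n hsn.le hnN)
  · rw [hdepmax n hsn hnN, (ih _ hpmax_lt hs_pmax hpmax_N).2]
    exact (IsShortestDist.isGreatest_DSet_succ hc hF hsn hnN (hpmax n hsn hnN)
      (hdmax _ hs_pmax hpmax_N)).unique (hdmax n hsn.le hnN)
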